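/- Suppose x_1,…,x_n take exactly two distinct values, with x_i = a for i ≤ n_1 and x_i = c for i > n_1 where a ≠ c and min(n_1, n−n_1) ≥ 3. Let v_1,…,v_n be i.i.d. Beta(1/2,3/2), w_i = v_i/Σ_j v_j, μ* = Σ w_i x_i, σ*² = Σ w_i(x_i−μ*)², and t* = √n(μ*−x̄)/σ*. Then E[(t*)²] < ∞. -/

import Mathlib

open MeasureTheory ProbabilityTheory

/-- The Beta(a,b) distribution on ℝ, with density proportional to
`x^(a-1) (1-x)^(b-1)` on `(0,1)`. -/
noncomputable def betaMeasure (a b : ℝ) : Measure ℝ :=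
  (volume.restrict (Set.Ioo (0:ℝ) 1)).withDensity
    (fun x => ENNReal.ofReal
      (x ^ (a - 1) * (1 - x) ^ (b - 1) /
        (∫ t in Set.Ioo (0:ℝ) 1, t ^ (a - 1) * (1 - t) ^ (b - 1))))

/-- The weighted bootstrap `t` statistic for weights `v` and data `x`. -/
noncomputable def tStar {n : ℕ} (x : Fin n → ℝ) (v : Fin n → ℝ) : ℝ :=
  let w : Fin n → ℝ := fun i => v i / ∑ j, v j
  let μstar : ℝ := ∑ i, w i * x i
  let σstar2 : ℝ := ∑ i, w i * (x i - μstar) ^ 2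
  let xbar : ℝ := (1 / n : ℝ) * ∑ i, x i
  Real.sqrt n * (μstar - xbar) / Real.sqrt σstar2

/-!
On the event (of full probability) that all weights lie in `(0, 1)`, write `λ*` for the total
weight `u₁ / (u₁ + u₂)` carried by the first group. Both `μ*` and `x̄` are convex combinations of
`a` and `c`, so `μ* - x̄ = (λ* - λ)(a - c)` with `λ = n₁ / n` and `σ*² = λ*(1 - λ*)(a - c)²`, whence
`(t*)² ≤ n / (λ*(1 - λ*)) ≤ n² (1/u₁ + 1/u₂)`. By AM-GM, `1/u ≤ ∏ vᵢ^(-1/k)` for a sum `u` of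
`k ≥ 3` weights, and by independence its expectation is a product of the moments
`E[v^(-1/k)]`, which are finite because the Beta(1/2, 3/2) density is `O(v^(-1/2))` at `0`.
-/

open Set Finset
open scoped ENNReal

theorem betaMeasure_ae_mem_Ioo (a b : ℝ) : ∀ᵐ y ∂_root_.betaMeasure a b, y ∈ Ioo (0 : ℝ) 1 :=
  (withDensity_absolutelyContinuous _ _).ae_le (ae_restrict_mem measurableSet_Ioo)

theorem lintegral_rpow_neg_betaMeasure_lt_top {a b p : ℝ} (hb : 1 ≤ b) (hp : p < a) :
    ∫⁻ y, ENNReal.ofReal (y ^ (-p)) ∂_root_.betaMeasure a b < ∞ := by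
  set B := ∫ t in Ioo (0 : ℝ) 1, t ^ (a - 1) * (1 - t) ^ (b - 1)
  set f : ℝ → ℝ := fun y => y ^ (a - 1) * (1 - y) ^ (b - 1) / B * y ^ (-p)
  have hf : IntegrableOn f (Ioo 0 1) := by
    have hdom : IntegrableOn (fun y : ℝ => y ^ (a - 1 - p) * |B|⁻¹) (Ioo 0 1) :=
      ((intervalIntegral.integrableOn_Ioo_rpow_iff one_pos).2 (by linarith)).mul_const _
    refine hdom.mono' (by fun_prop) ((ae_restrict_iff' measurableSet_Ioo).2 (.of_forall ?_))
    rintro y ⟨hy0, hy1⟩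
    have h1 : (1 - y) ^ (b - 1) ≤ 1 := Real.rpow_le_one (by linarith) (by linarith) (by linarith)
    rw [show a - 1 - p = (a - 1) + -p by ring, Real.rpow_add hy0]
    simp only [f, norm_mul, norm_div, Real.norm_of_nonneg (Real.rpow_nonneg hy0.le _),
      Real.norm_of_nonneg (Real.rpow_nonneg (sub_nonneg.2 hy1.le) _), Real.norm_eq_abs]
    calc y ^ (a - 1) * (1 - y) ^ (b - 1) / |B| * y ^ (-p)
        = y ^ (a - 1) * y ^ (-p) * |B|⁻¹ * (1 - y) ^ (b - 1) := by ring
      _ ≤ y ^ (a - 1) * y ^ (-p) * |B|⁻¹ :=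
        mul_le_of_le_one_right (by positivity) h1
  rw [_root_.betaMeasure, lintegral_withDensity_eq_lintegral_mul₀ (by fun_prop) (by fun_prop)]
  refine lt_of_eq_of_lt (setLIntegral_congr_fun measurableSet_Ioo fun y hy => ?_)
    hf.lintegral_lt_top
  exact (ENNReal.ofReal_mul' (Real.rpow_nonneg hy.1.le _)).symm

theorem inv_sum_le_prod_rpow_neg {ι : Type*} {s : Finset ι} (hs : s.Nonempty) {z : ι → ℝ}
    (hz : ∀ i ∈ s, 0 < z i) : (∑ i ∈ s, z i)⁻¹ ≤ ∏ i ∈ s, z i ^ (-(#s : ℝ)⁻¹) := by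
  have hk : (1 : ℝ) ≤ #s := by exact_mod_cast hs.card_pos
  have hamgm : ∏ i ∈ s, z i ^ (#s : ℝ)⁻¹ ≤ ∑ i ∈ s, z i :=
    calc ∏ i ∈ s, z i ^ (#s : ℝ)⁻¹ ≤ ∑ i ∈ s, (#s : ℝ)⁻¹ * z i :=
          Real.geom_mean_le_arith_mean_weighted s _ z (fun _ _ => by positivity)
            (by simp [Finset.sum_const, (by positivity : (#s : ℝ) ≠ 0)]) fun i hi => (hz i hi).le
      _ ≤ ∑ i ∈ s, z i := by
          rw [← Finset.mul_sum]
          exact mul_le_of_le_one_left (Finset.sum_nonneg fun i hi => (hz i hi).le)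
            (inv_le_one_of_one_le₀ hk)
  have hprod : 0 < ∏ i ∈ s, z i ^ (#s : ℝ)⁻¹ :=
    Finset.prod_pos fun i hi => Real.rpow_pos_of_pos (hz i hi) _
  calc (∑ i ∈ s, z i)⁻¹ ≤ (∏ i ∈ s, z i ^ (#s : ℝ)⁻¹)⁻¹ := inv_anti₀ hprod hamgm
    _ = ∏ i ∈ s, z i ^ (-(#s : ℝ)⁻¹) := by
        rw [← Finset.prod_inv_distrib]
        exact Finset.prod_congr rfl fun i hi => (Real.rpow_neg (hz i hi).le _).symm

theorem lintegral_inv_sum_lt_top_of_iIndepFun {Ω ι : Type*} [MeasurableSpace Ω] {μ : Measure Ω}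
    {v : ι → Ω → ℝ} (hmeas : ∀ i, Measurable (v i)) (hindep : iIndepFun v μ)
    {s : Finset ι} (hs : s.Nonempty) (hpos : ∀ᵐ ω ∂μ, ∀ i ∈ s, 0 < v i ω)
    (hmom : ∀ i ∈ s, ∫⁻ ω, ENNReal.ofReal (v i ω ^ (-(#s : ℝ)⁻¹)) ∂μ < ∞) :
    ∫⁻ ω, ENNReal.ofReal (∑ i ∈ s, v i ω)⁻¹ ∂μ < ∞ := by
  set G : ι → Ω → ℝ≥0∞ := fun i ω => ENNReal.ofReal (v i ω ^ (-(#s : ℝ)⁻¹))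
  have hG : iIndepFun G μ :=
    hindep.comp (fun _ x => ENNReal.ofReal (x ^ (-(#s : ℝ)⁻¹))) fun _ => by fun_prop
  calc ∫⁻ ω, ENNReal.ofReal (∑ i ∈ s, v i ω)⁻¹ ∂μ ≤ ∫⁻ ω, ∏ i ∈ s, G i ω ∂μ := by
        refine lintegral_mono_ae (hpos.mono fun ω hω => ?_)
        rw [← ENNReal.ofReal_prod_of_nonneg fun i hi => Real.rpow_nonneg (hω i hi).le _]
        exact ENNReal.ofReal_le_ofReal (inv_sum_le_prod_rpow_neg hs hω)
    _ = ∏ i ∈ s, ∫⁻ ω, G i ω ∂μ :=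
        lintegral_prod_eq_prod_lintegral_of_indepFun s G hG fun i => by
          have := hmeas i; fun_prop
    _ < ∞ := ENNReal.prod_lt_top hmom

theorem sum_mul_comp_eq_of_two_valued {ι : Type*} [Fintype ι] [DecidableEq ι] {s : Finset ι}
    {a c : ℝ} {x : ι → ℝ} (hxs : ∀ i ∈ s, x i = a) (hxsc : ∀ i ∉ s, x i = c)
    (w : ι → ℝ) (f : ℝ → ℝ) :
    ∑ i, w i * f (x i) = (∑ i ∈ s, w i) * f a + (∑ i ∈ sᶜ, w i) * f c := by
  rw [← Finset.sum_add_sum_compl s, Finset.sum_mul, Finset.sum_mul]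
  congr 1 <;> refine Finset.sum_congr rfl fun i hi => ?_
  · rw [hxs i hi]
  · rw [hxsc i (Finset.mem_compl.1 hi)]

theorem mul_sq_div_le_div {N t l d : ℝ} (hN : 0 ≤ N) (ht : t ∈ Icc (0 : ℝ) 1)
    (hl : l ∈ Icc (0 : ℝ) 1) :
    N * ((t - l) * d) ^ 2 / (t * (1 - t) * d ^ 2) ≤ N / (t * (1 - t)) := by
  have htt : 0 ≤ t * (1 - t) := mul_nonneg ht.1 (sub_nonneg.2 ht.2)
  have htl : (t - l) ^ 2 ≤ 1 := by nlinarith [ht.1, ht.2, hl.1, hl.2]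
  calc N * ((t - l) * d) ^ 2 / (t * (1 - t) * d ^ 2)
      = N * (t - l) ^ 2 / (t * (1 - t)) * (d ^ 2 / d ^ 2) := by
        rw [mul_pow, ← mul_assoc, mul_div_mul_comm]
    _ ≤ N / (t * (1 - t)) * 1 := by
        gcongr
        · exact mul_le_of_le_one_right hN htl
        · exact div_self_le_one _
    _ = N / (t * (1 - t)) := mul_one _

theorem sq_tStar_le_of_two_valued {n : ℕ} {s : Finset (Fin n)} {a c : ℝ} {x : Fin n → ℝ}
    (hxs : ∀ i ∈ s, x i = a) (hxsc : ∀ i ∉ s, x i = c) {v : Fin n → ℝ} (hv : ∀ i, 0 ≤ v i)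
    (hsum : 0 < ∑ i, v i) :
    tStar x v ^ 2 ≤ n * (∑ i, v i) ^ 2 / ((∑ i ∈ s, v i) * ∑ i ∈ sᶜ, v i) := by
  simp only [tStar]
  set S := ∑ i, v i
  set u₁ := ∑ i ∈ s, v i
  set u₂ := ∑ i ∈ sᶜ, v i
  have hS : u₁ + u₂ = S := Finset.sum_add_sum_compl s v
  have hn : (n : ℝ) ≠ 0 := by
    rintro hn
    obtain rfl : n = 0 := by exact_mod_cast hn
    simp [S] at hsum
  have hcard : (#s : ℝ) + #sᶜ = n := by
    exact_mod_cast (Finset.card_add_card_compl s).trans (Fintype.card_fin n)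
  have hw : ∀ f : ℝ → ℝ, ∑ i, v i / S * f (x i) = u₁ / S * f a + (1 - u₁ / S) * f c := by
    intro f
    rw [sum_mul_comp_eq_of_two_valued hxs hxsc, ← Finset.sum_div, ← Finset.sum_div]
    congr 2
    field_simp
    linarith
  have hmean : 1 / (n : ℝ) * ∑ i, x i = #s / n * a + (1 - #s / n) * c := by
    have := sum_mul_comp_eq_of_two_valued hxs hxsc (fun _ => (1 : ℝ)) id
    simp only [one_mul, id, Finset.sum_const, nsmul_eq_mul, mul_one] at this
    rw [this]
    field_simp
    linear_combination c * hcard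
  have hμ : ∑ i, v i / S * x i = u₁ / S * a + (1 - u₁ / S) * c := hw id
  rw [hμ, hw fun y => (y - _) ^ 2, hmean]
  set t := u₁ / S
  set l := (#s : ℝ) / n
  have ht : t ∈ Icc (0 : ℝ) 1 :=
    ⟨div_nonneg (Finset.sum_nonneg fun i _ => hv i) hsum.le,
      div_le_one_of_le₀ (by linarith [Finset.sum_nonneg fun i (_ : i ∈ sᶜ) => hv i]) hsum.le⟩
  have hl : l ∈ Icc (0 : ℝ) 1 :=
    ⟨by positivity, div_le_one_of_le₀ (by linarith [(#sᶜ).cast_nonneg (α := ℝ)]) (n.cast_nonneg)⟩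
  have hnum : t * a + (1 - t) * c - (l * a + (1 - l) * c) = (t - l) * (a - c) := by ring
  have hvar : t * (a - (t * a + (1 - t) * c)) ^ 2 + (1 - t) * (c - (t * a + (1 - t) * c)) ^ 2
      = t * (1 - t) * (a - c) ^ 2 := by ring
  rw [hnum, hvar, div_pow, mul_pow, Real.sq_sqrt n.cast_nonneg,
    Real.sq_sqrt (mul_nonneg (mul_nonneg ht.1 (sub_nonneg.2 ht.2)) (sq_nonneg _))]
  calc (n : ℝ) * ((t - l) * (a - c)) ^ 2 / (t * (1 - t) * (a - c) ^ 2)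
      ≤ n / (t * (1 - t)) := mul_sq_div_le_div n.cast_nonneg ht hl
    _ = n * S ^ 2 / (u₁ * u₂) := by
        have hS0 : u₁ + u₂ ≠ 0 := hS ▸ hsum.ne'
        simp only [t]
        rw [← hS]
        field_simp
        ring

theorem sq_tStar_le_of_two_valued_of_le_one {n : ℕ} {s : Finset (Fin n)} {a c : ℝ}
    {x : Fin n → ℝ} (hxs : ∀ i ∈ s, x i = a) (hxsc : ∀ i ∉ s, x i = c) {v : Fin n → ℝ}
    (hv : ∀ i, v i ∈ Ioc (0 : ℝ) 1) (hs : s.Nonempty) (hsc : sᶜ.Nonempty) :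
    tStar x v ^ 2 ≤ n ^ 2 * ((∑ i ∈ s, v i)⁻¹ + (∑ i ∈ sᶜ, v i)⁻¹) := by
  have hu₁ : 0 < ∑ i ∈ s, v i := Finset.sum_pos (fun i _ => (hv i).1) hs
  have hu₂ : 0 < ∑ i ∈ sᶜ, v i := Finset.sum_pos (fun i _ => (hv i).1) hsc
  have hS : ∑ i ∈ s, v i + ∑ i ∈ sᶜ, v i = ∑ i, v i := Finset.sum_add_sum_compl s v
  have hSn : ∑ i, v i ≤ n := by
    simpa using Finset.sum_le_sum fun i (_ : i ∈ Finset.univ) => (hv i).2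
  calc tStar x v ^ 2 ≤ n * (∑ i, v i) ^ 2 / ((∑ i ∈ s, v i) * ∑ i ∈ sᶜ, v i) :=
        sq_tStar_le_of_two_valued hxs hxsc (fun i => (hv i).1.le) (hS ▸ by positivity)
    _ = n * (∑ i, v i) * ((∑ i ∈ s, v i)⁻¹ + (∑ i ∈ sᶜ, v i)⁻¹) := by
        rw [← hS]; field_simp; ring
    _ ≤ n ^ 2 * ((∑ i ∈ s, v i)⁻¹ + (∑ i ∈ sᶜ, v i)⁻¹) := by
        rw [sq]; gcongr

theorem tstar_sq_integrable_two_values_general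
    {Ω : Type*} [MeasurableSpace Ω] (μ : Measure Ω)
    (n n₁ : ℕ) (a c : ℝ)
    (hn₁ : 3 ≤ n₁) (hn₂ : 3 ≤ n - n₁)
    (x : Fin n → ℝ)
    (hx : ∀ i : Fin n, ((i : ℕ) < n₁ → x i = a) ∧ (n₁ ≤ (i : ℕ) → x i = c))
    (v : Fin n → Ω → ℝ)
    (hmeas : ∀ i, Measurable (v i))
    (hindep : iIndepFun v μ)
    (hdist : ∀ i, Measure.map (v i) μ = _root_.betaMeasure (1/2) (3/2)) :
    ∫⁻ ω, ENNReal.ofReal ((tStar x (fun i => v i ω)) ^ 2) ∂μ < ⊤ := by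
  set s : Finset (Fin n) := Finset.univ.filter fun i => (i : ℕ) < n₁
  have hcard : #s = n₁ := by rw [Fin.card_filter_val_lt]; omega
  have hxs : ∀ i ∈ s, x i = a := fun i hi => (hx i).1 (Finset.mem_filter.1 hi).2
  have hxsc : ∀ i ∉ s, x i = c := fun i hi => (hx i).2 (by simpa [s] using hi)
  have hcardc : #sᶜ = n - n₁ := by rw [Finset.card_compl, Fintype.card_fin, hcard]
  have hv : ∀ᵐ ω ∂μ, ∀ i, v i ω ∈ Ioo (0 : ℝ) 1 := ae_all_iff.2 fun i =>
    ae_of_ae_map (hmeas i).aemeasurable ((hdist i).symm ▸ betaMeasure_ae_mem_Ioo _ _)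
  have hinv (t : Finset (Fin n)) (ht : 3 ≤ #t) :
      ∫⁻ ω, ENNReal.ofReal (∑ i ∈ t, v i ω)⁻¹ ∂μ < ∞ := by
    refine lintegral_inv_sum_lt_top_of_iIndepFun hmeas hindep (Finset.card_pos.1 (by omega))
      (hv.mono fun ω hω i _ => (hω i).1) fun i _ => ?_
    rw [← lintegral_map (f := fun y => ENNReal.ofReal (y ^ (-(#t : ℝ)⁻¹))) (by fun_prop)
      (hmeas i), hdist i]
    have h3 : (3 : ℝ) ≤ #t := by exact_mod_cast ht
    refine lintegral_rpow_neg_betaMeasure_lt_top (by norm_num) ?_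
    calc (#t : ℝ)⁻¹ ≤ 3⁻¹ := inv_anti₀ (by norm_num) h3
      _ < 1 / 2 := by norm_num
  calc ∫⁻ ω, ENNReal.ofReal ((tStar x (fun i => v i ω)) ^ 2) ∂μ
      ≤ ∫⁻ ω, ENNReal.ofReal ((n : ℝ) ^ 2) * (ENNReal.ofReal (∑ i ∈ s, v i ω)⁻¹ +
          ENNReal.ofReal (∑ i ∈ sᶜ, v i ω)⁻¹) ∂μ := by
        refine lintegral_mono_ae (hv.mono fun ω hω => ?_)
        have hpos (t : Finset (Fin n)) : 0 ≤ (∑ i ∈ t, v i ω)⁻¹ :=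
          inv_nonneg.2 (Finset.sum_nonneg fun i _ => (hω i).1.le)
        rw [← ENNReal.ofReal_add (hpos s) (hpos sᶜ), ← ENNReal.ofReal_mul (by positivity)]
        exact ENNReal.ofReal_le_ofReal <| sq_tStar_le_of_two_valued_of_le_one hxs hxsc
          (fun i => Ioo_subset_Ioc_self (hω i)) (Finset.card_pos.1 (by omega))
          (Finset.card_pos.1 (by omega))
    _ = ENNReal.ofReal ((n : ℝ) ^ 2) * (∫⁻ ω, ENNReal.ofReal (∑ i ∈ s, v i ω)⁻¹ ∂μ +
          ∫⁻ ω, ENNReal.ofReal (∑ i ∈ sᶜ, v i ω)⁻¹ ∂μ) := by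
        rw [lintegral_const_mul' _ _ ENNReal.ofReal_ne_top, lintegral_add_left (by fun_prop)]
    _ < ∞ := ENNReal.mul_lt_top ENNReal.ofReal_lt_top
        (ENNReal.add_lt_top.2 ⟨hinv s (hcard ▸ hn₁), hinv sᶜ (hcardc ▸ hn₂)⟩)

theorem tstar_sq_integrable_two_values
    {Ω : Type*} [MeasurableSpace Ω] (μ : Measure Ω) [IsProbabilityMeasure μ]
    (n n₁ : ℕ) (a c : ℝ) (hac : a ≠ c)
    (hn₁ : 3 ≤ n₁) (hn₂ : 3 ≤ n - n₁)
    (x : Fin n → ℝ)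
    (hx : ∀ i : Fin n, ((i : ℕ) < n₁ → x i = a) ∧ (n₁ ≤ (i : ℕ) → x i = c))
    (v : Fin n → Ω → ℝ)
    (hmeas : ∀ i, Measurable (v i))
    (hindep : iIndepFun v μ)
    (hdist : ∀ i, Measure.map (v i) μ = _root_.betaMeasure (1/2) (3/2)) :
    ∫⁻ ω, ENNReal.ofReal ((tStar x (fun i => v i ω)) ^ 2) ∂μ < ⊤ :=
  tstar_sq_integrable_two_values_general μ n n₁ a c hn₁ hn₂ x hx v hmeas hindep hdist
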